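/- For all m, n ≥ 0 and -n ≤ k ≤ n, the coefficient identity corresponding to P(x,y) * (cosh(x+y) - (x+y) sinh(x+y)) = cosh(x-y) holds, where P(x,y) = sum_{n≥0} sum_{k=-n}^{n} 2^n p_n(k) x^{n+k} y^{n-k}/((n+k)!(n-k)!), as an identity of formal power series in ℚ[[x,y]]. -/

import Mathlib

noncomputable def p : ℕ → ℤ → ℤ
  | 0, k => if k = 0 then 1 else 0
  | n + 1, k => ∑ j ∈ Finset.Icc (-(n : ℤ)) (n : ℤ), |j - k| * p n j

/-- `P(x,y) = ∑_{n,k} 2^n p_n(k) x^{n+k} y^{n-k}/((n+k)!(n-k)!)` as an element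
of `ℚ[[x,y]]` (variables indexed by `Fin 2`, `x = X 0`, `y = X 1`). -/
noncomputable def Pxy : MvPowerSeries (Fin 2) ℚ := fun d =>
  if (d 0 + d 1) % 2 = 0 then
    ((2 ^ ((d 0 + d 1) / 2) * p ((d 0 + d 1) / 2) (((d 0 : ℤ) - (d 1 : ℤ)) / 2) : ℤ) : ℚ) /
      ((d 0).factorial * (d 1).factorial)
  else 0

/-- `cosh(x+y)` in `ℚ[[x,y]]`: the coefficient of `x^i y^j` is `1/(i! j!)` for
`i + j` even, and `0` otherwise. -/
noncomputable def coshXY : MvPowerSeries (Fin 2) ℚ := fun d =>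
  if (d 0 + d 1) % 2 = 0 then (1 : ℚ) / ((d 0).factorial * (d 1).factorial) else 0

/-- `sinh(x+y)` in `ℚ[[x,y]]`. -/
noncomputable def sinhXY : MvPowerSeries (Fin 2) ℚ := fun d =>
  if (d 0 + d 1) % 2 = 1 then (1 : ℚ) / ((d 0).factorial * (d 1).factorial) else 0

/-- `cosh(x-y)` in `ℚ[[x,y]]`: the coefficient of `x^i y^j` is `(-1)^j/(i! j!)`
for `i + j` even, and `0` otherwise. -/
noncomputable def coshXmY : MvPowerSeries (Fin 2) ℚ := fun d =>
  if (d 0 + d 1) % 2 = 0 then ((-1 : ℚ)) ^ (d 1) / ((d 0).factorial * (d 1).factorial) else 0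

/-!
Both `P` and `cosh(x - y) / G`, where `G = cosh(x + y) - (x + y) sinh(x + y)`, solve the boundary
value problem `(∂ₓ - ∂_y)² F = 4 F`, `F(x, y) = F(y, x)`, `(x (∂ₓ - ∂_y) F - 2 F)(x, 0) = -2`.
For `P` the wave equation is the recursion for `p` differenced twice in `k` (the second
difference of `k ↦ |j - k|` is `2 [j = k]`), and the boundary condition comes from
`p_{n+1}(k) = k ∑ⱼ p_n(j)` for `k ≥ n`. For `cosh(x - y) / G` it holds because `∂ₓ - ∂_y`
kills every series in `x + y`, and on `y = 0` the series `x (∂ₓ - ∂_y) cosh(x - y) - 2 cosh(x - y)`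
is `-2 G(x, 0)`.

The problem has at most one solution: in the coefficients `a! b! [xᵃ yᵇ] F`, the wave equation
makes each homogeneous component affine along its antidiagonal once the lower ones vanish,
symmetry makes it constant, and the boundary condition makes the constant zero.
-/

lemma sum_Icc_symm_comp_neg {M : Type*} [AddCommMonoid M] (a : ℤ) (f : ℤ → M) :
    ∑ j ∈ Finset.Icc (-a) a, f (-j) = ∑ j ∈ Finset.Icc (-a) a, f j :=
  Finset.sum_equiv (Equiv.neg ℤ) (fun j => by simp only [Finset.mem_Icc, Equiv.neg_apply]; omega)
    (fun _ _ => rfl)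

lemma abs_sub_second_diff (j k : ℤ) :
    |j - (k + 1)| - 2 * |j - k| + |j - (k - 1)| = if j = k then 2 else 0 := by
  split_ifs with h
  · subst h; norm_num
  · rcases lt_or_gt_of_ne h with h | h
    · rw [abs_of_neg (by omega : j - (k + 1) < 0), abs_of_neg (by omega : j - k < 0),
        abs_of_nonpos (by omega : j - (k - 1) ≤ 0)]
      ring
    · rw [abs_of_nonneg (by omega : 0 ≤ j - (k + 1)), abs_of_pos (by omega : 0 < j - k),
        abs_of_pos (by omega : 0 < j - (k - 1))]
      ring

section p
open Finset

lemma p_succ (n : ℕ) (k : ℤ) : p (n + 1) k = ∑ j ∈ Icc (-(n : ℤ)) n, |j - k| * p n j := by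
  rw [p]

lemma p_neg (n : ℕ) (k : ℤ) : p n (-k) = p n k := by
  induction n generalizing k with
  | zero => simp [p]
  | succ n ih =>
    rw [p_succ, p_succ, ← sum_Icc_symm_comp_neg]
    refine sum_congr rfl fun j _ => ?_
    rw [ih, ← abs_neg]
    ring_nf

lemma sum_mul_p_eq_zero (n : ℕ) : ∑ j ∈ Icc (-(n : ℤ)) n, j * p n j = 0 := by
  have h := sum_Icc_symm_comp_neg (n : ℤ) fun j => j * p n j
  simp only [p_neg, neg_mul, sum_neg_distrib] at h
  linarith

lemma p_succ_of_le {n : ℕ} {k : ℤ} (hk : n ≤ k) :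
    p (n + 1) k = k * ∑ j ∈ Icc (-(n : ℤ)) n, p n j := by
  calc p (n + 1) k = ∑ j ∈ Icc (-(n : ℤ)) n, (k * p n j - j * p n j) :=
        (p_succ n k).trans <| sum_congr rfl fun j hj => by
          rw [abs_of_nonpos (by have := (mem_Icc.mp hj).2; omega)]
          ring
    _ = k * ∑ j ∈ Icc (-(n : ℤ)) n, p n j := by
        rw [sum_sub_distrib, sum_mul_p_eq_zero, sub_zero, mul_sum]

lemma p_succ_second_diff {n : ℕ} {k : ℤ} (hk : k ∈ Icc (-(n : ℤ)) n) :
    p (n + 1) (k + 1) - 2 * p (n + 1) k + p (n + 1) (k - 1) = 2 * p n k := by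
  simp only [p_succ, mul_sum, ← sum_sub_distrib, ← sum_add_distrib]
  calc _ = ∑ j ∈ Icc (-(n : ℤ)) n, (if j = k then 2 else 0) * p n j :=
        sum_congr rfl fun j _ => by rw [← abs_sub_second_diff]; ring
    _ = 2 * p n k := by simp [ite_mul, hk]

end p

lemma eq_add_mul_of_second_diff_eq_zero {d : ℕ → ℚ} {N : ℕ}
    (h : ∀ t, t + 2 ≤ N → d (t + 2) - 2 * d (t + 1) + d t = 0) :
    ∀ t ≤ N, d t = d 0 + t * (d 1 - d 0) := by
  intro t
  induction t using Nat.twoStepInduction with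
  | zero => simp
  | one => simp
  | more t ih ih' =>
    intro ht
    have h' := h t ht
    rw [ih (by omega), ih' (by omega)] at h'
    push_cast at h' ⊢
    linear_combination h'

theorem eq_zero_of_wave {e : ℕ → ℕ → ℚ}
    (wave : ∀ a b, e (a + 2) b - 2 * e (a + 1) (b + 1) + e a (b + 2) = 4 * e a b)
    (symm : ∀ a b, e a b = e b a) (origin : e 0 0 = 0)
    (boundary : ∀ N : ℕ, (N + 1) * (e (N + 1) 0 - e N 1) = 2 * e (N + 1) 0) (a b : ℕ) :
    e a b = 0 := by
  induction hN : a + b using Nat.strong_induction_on generalizing a b with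
  | _ N ih =>
  obtain _ | n := N
  · obtain ⟨rfl, rfl⟩ : a = 0 ∧ b = 0 := by omega
    exact origin
  set d : ℕ → ℚ := fun t => e t (n + 1 - t) with hd
  have affine := eq_add_mul_of_second_diff_eq_zero (d := d) (N := n + 1) fun t ht => by
    have hw := wave t (n - 1 - t)
    rw [ih (t + (n - 1 - t)) (by omega) t (n - 1 - t) rfl] at hw
    simp only [hd]
    rw [show n + 1 - (t + 2) = n - 1 - t by omega, show n + 1 - (t + 1) = n - 1 - t + 1 by omega,
      show n + 1 - t = n - 1 - t + 2 by omega]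
    linarith
  have hslope : d 1 = d 0 := by
    have hends : d (n + 1) = d 0 := by simp [hd, symm (n + 1) 0]
    rw [affine (n + 1) le_rfl] at hends
    have h : ((n : ℚ) + 1) * (d 1 - d 0) = 0 := by push_cast at hends; linarith
    exact sub_eq_zero.mp ((mul_eq_zero.mp h).resolve_left (by positivity))
  have hconst : ∀ t ≤ n + 1, d t = d 0 := fun t ht => by rw [affine t ht, hslope]; ring
  have hzero : d 0 = 0 := by
    have hb := boundary n
    have h1 : e (n + 1) 0 = d 0 := by rw [← hconst (n + 1) le_rfl]; simp [hd]
    have h2 : e n 1 = d 0 := by rw [← hconst n (by omega)]; simp [hd, show n + 1 - n = 1 by omega]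
    rw [h1, h2] at hb
    linarith
  rw [← hzero, ← hconst a (by omega)]
  simp [hd, show n + 1 - a = b by omega]

theorem Derivation.map_mul_of_map_eq_zero {R A : Type*} [CommSemiring R] [CommSemiring A]
    [Algebra R A] (D : Derivation R A A) {a b : A} (hb : D b = 0) : D (a * b) = D a * b := by
  rw [D.leibniz, hb, smul_zero, zero_add, smul_eq_mul, mul_comm]

open MvPowerSeries Finsupp
open scoped Nat

noncomputable section

abbrev Series := MvPowerSeries (Fin 2) ℚ

def expCoeff (F : Series) (a b : ℕ) : ℚ := a ! * b ! * coeff (single 0 a + single 1 b) F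

def dirDeriv : Derivation ℚ Series Series := pderiv ℚ 0 - pderiv ℚ 1

def swapXY : Series →ₐ[ℚ] Series := rename (Equiv.swap (0 : Fin 2) 1)

def setYZero : Series →ₐ[ℚ] MvPowerSeries Unit ℚ := killCompl (Function.Embedding.punit 0)

@[simp] lemma single_add_single_apply_zero (a b : ℕ) :
    (single (0 : Fin 2) a + single 1 b : Fin 2 →₀ ℕ) 0 = a := by
  simp

@[simp] lemma single_add_single_apply_one (a b : ℕ) :
    (single (0 : Fin 2) a + single 1 b : Fin 2 →₀ ℕ) 1 = b := by
  simp

lemma single_add_single_eq (d : Fin 2 →₀ ℕ) : single 0 (d 0) + single 1 (d 1) = d := by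
  ext i; fin_cases i <;> simp

lemma Series.ext_expCoeff {F G : Series} (h : ∀ a b, expCoeff F a b = expCoeff G a b) :
    F = G := by
  ext d
  rw [← single_add_single_eq d]
  exact mul_left_cancel₀ (by positivity) (h (d 0) (d 1))

@[simp] lemma expCoeff_zero (a b : ℕ) : expCoeff 0 a b = 0 := by
  simp [expCoeff]

@[simp] lemma expCoeff_add (F G : Series) (a b : ℕ) :
    expCoeff (F + G) a b = expCoeff F a b + expCoeff G a b := by
  simp [expCoeff, mul_add]

@[simp] lemma expCoeff_sub (F G : Series) (a b : ℕ) :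
    expCoeff (F - G) a b = expCoeff F a b - expCoeff G a b := by
  simp [expCoeff, mul_sub]

@[simp] lemma expCoeff_smul (c : ℚ) (F : Series) (a b : ℕ) :
    expCoeff (c • F) a b = c * expCoeff F a b := by
  simp only [expCoeff, map_smul, smul_eq_mul]
  ring

lemma expCoeff_C (c : ℚ) (a b : ℕ) : expCoeff (C c) a b = if a = 0 ∧ b = 0 then c else 0 := by
  simp only [expCoeff, coeff_C, add_eq_zero, single_eq_zero]
  split_ifs with h
  · simp [h]
  · simp

lemma expCoeff_dirDeriv (F : Series) (a b : ℕ) :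
    expCoeff (dirDeriv F) a b = expCoeff F (a + 1) b - expCoeff F a (b + 1) := by
  simp only [expCoeff, dirDeriv, Derivation.coe_sub, Pi.sub_apply, map_sub, coeff_pderiv]
  rw [add_right_comm, ← single_add, add_assoc, ← single_add]
  simp only [single_add_single_apply_zero, single_add_single_apply_one, Nat.factorial_succ]
  push_cast
  ring

lemma expCoeff_dirDeriv_dirDeriv (F : Series) (a b : ℕ) :
    expCoeff (dirDeriv (dirDeriv F)) a b =
      expCoeff F (a + 2) b - 2 * expCoeff F (a + 1) (b + 1) + expCoeff F a (b + 2) := by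
  simp only [expCoeff_dirDeriv]
  ring

lemma dirDeriv_eq_zero_of_expCoeff {F : Series}
    (h : ∀ a b, expCoeff F (a + 1) b = expCoeff F a (b + 1)) : dirDeriv F = 0 :=
  Series.ext_expCoeff fun a b => by rw [expCoeff_dirDeriv, h, sub_self, expCoeff_zero]

lemma dirDeriv_inv (F : Series) : dirDeriv F⁻¹ = -F⁻¹ ^ 2 * dirDeriv F := by
  simp only [dirDeriv, Derivation.coe_sub, Pi.sub_apply, pderiv_inv', mul_sub]

lemma expCoeff_swapXY (F : Series) (a b : ℕ) : expCoeff (swapXY F) a b = expCoeff F b a := by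
  have h := coeff_embDomain_rename (R := ℚ) (Equiv.swap (0 : Fin 2) 1).toEmbedding F
    (single 0 b + single 1 a)
  simp only [embDomain_add, embDomain_single, Equiv.coe_toEmbedding] at h
  simp only [expCoeff, swapXY]
  rw [add_comm (single 0 a), ← h]
  simp [mul_comm]

lemma expCoeff_X_zero_mul_succ (F : Series) (a b : ℕ) :
    expCoeff (X 0 * F) (a + 1) b = (a + 1) * expCoeff F a b := by
  simp only [expCoeff, X_def]
  rw [show single (0 : Fin 2) (a + 1) + single 1 b = single 0 1 + (single 0 a + single 1 b) by
    rw [← add_assoc, ← single_add, add_comm 1 a], coeff_add_monomial_mul]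
  push_cast [Nat.factorial_succ]
  ring

lemma expCoeff_X_zero_mul_zero_left (F : Series) (b : ℕ) : expCoeff (X 0 * F) 0 b = 0 := by
  simp only [expCoeff, X_def, coeff_monomial_mul]
  rw [if_neg]
  · simp
  · intro h; simpa using h 0

lemma expCoeff_X_one_mul_zero_right (F : Series) (a : ℕ) : expCoeff (X 1 * F) a 0 = 0 := by
  simp only [expCoeff, X_def, coeff_monomial_mul]
  rw [if_neg]
  · simp
  · intro h; simpa using h 1

lemma setYZero_eq_iff {F G : Series} :
    setYZero F = setYZero G ↔ ∀ N, expCoeff F N 0 = expCoeff G N 0 := by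
  have key : ∀ (H : Series) (N : ℕ),
      N ! * coeff (single () N) (setYZero H) = expCoeff H N 0 := fun H N => by
    simp [setYZero, coeff_killCompl, expCoeff, Function.Embedding.punit]
  constructor
  · intro h N
    rw [← key, ← key, h]
  · intro h
    refine MvPowerSeries.ext fun x => ?_
    rw [unique_single x]
    exact mul_left_cancel₀ (by positivity : ((x default) ! : ℚ) ≠ 0) (by rw [key, key, h])

structure SolvesBVP (F : Series) : Prop where
  wave : dirDeriv (dirDeriv F) = (4 : ℚ) • F
  symm : swapXY F = F
  boundary : setYZero (X 0 * dirDeriv F - (2 : ℚ) • F) = -2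

theorem SolvesBVP.unique {F G : Series} (hF : SolvesBVP F) (hG : SolvesBVP G) : F = G := by
  rw [← sub_eq_zero]
  set E := F - G
  have hwave : dirDeriv (dirDeriv E) = (4 : ℚ) • E := by
    rw [map_sub, map_sub, hF.wave, hG.wave, smul_sub]
  have hboundary : ∀ N, expCoeff (X 0 * dirDeriv E - (2 : ℚ) • E) N 0 = 0 := by
    have h : setYZero (X 0 * dirDeriv E - (2 : ℚ) • E) = setYZero 0 := by
      have hF' := hF.boundary
      have hG' := hG.boundary
      simp only [E, map_sub, map_mul, map_smul, mul_sub, smul_sub] at hF' hG' ⊢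
      rw [map_zero]
      linear_combination hF' - hG'
    simpa using setYZero_eq_iff.mp h
  refine Series.ext_expCoeff fun a b => ?_
  rw [expCoeff_zero]
  refine eq_zero_of_wave (e := expCoeff E) (fun a b => ?_) (fun a b => ?_) ?_ (fun N => ?_) a b
  · rw [← expCoeff_dirDeriv_dirDeriv, hwave, expCoeff_smul]
  · rw [← expCoeff_swapXY, map_sub, hF.symm, hG.symm]
  · simpa [expCoeff_X_zero_mul_zero_left] using hboundary 0
  · have h := hboundary (N + 1)
    rw [expCoeff_sub, expCoeff_X_zero_mul_succ, expCoeff_dirDeriv, expCoeff_smul] at h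
    push_cast at h ⊢
    linarith

lemma expCoeff_Pxy_of_odd {a b : ℕ} (h : (a + b) % 2 = 1) : expCoeff Pxy a b = 0 := by
  simp [expCoeff, coeff_apply, Pxy, h]

lemma expCoeff_Pxy_of_eq {a b m : ℕ} {k : ℤ} (hm : a + b = 2 * m) (hk : (a : ℤ) - b = 2 * k) :
    expCoeff Pxy a b = 2 ^ m * p m k := by
  simp only [expCoeff, coeff_apply, Pxy, single_add_single_apply_zero, single_add_single_apply_one,
    hm, Nat.mul_mod_right, if_true, Nat.mul_div_cancel_left m two_pos,
    show ((a : ℤ) - b) / 2 = k by omega]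
  rw [mul_div_cancel₀ _ (by positivity)]
  push_cast
  rfl

lemma dirDeriv_dirDeriv_Pxy : dirDeriv (dirDeriv Pxy) = (4 : ℚ) • Pxy := by
  refine Series.ext_expCoeff fun a b => ?_
  rw [expCoeff_dirDeriv_dirDeriv, expCoeff_smul]
  rcases Nat.even_or_odd' (a + b) with ⟨m, hm | hm⟩
  · obtain ⟨k, hk⟩ : ∃ k : ℤ, (a : ℤ) - b = 2 * k := ⟨((a : ℤ) - b) / 2, by omega⟩
    rw [expCoeff_Pxy_of_eq hm hk,
      expCoeff_Pxy_of_eq (m := m + 1) (k := k + 1) (by omega) (by omega),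
      expCoeff_Pxy_of_eq (m := m + 1) (k := k) (by omega) (by push_cast; omega),
      expCoeff_Pxy_of_eq (m := m + 1) (k := k - 1) (by omega) (by push_cast; omega)]
    have h : (p (m + 1) (k + 1) : ℚ) - 2 * p (m + 1) k + p (m + 1) (k - 1) = 2 * p m k := by
      exact_mod_cast p_succ_second_diff (Finset.mem_Icc.mpr ⟨by omega, by omega⟩)
    rw [pow_succ]
    linear_combination (2 : ℚ) ^ m * 2 * h
  · rw [expCoeff_Pxy_of_odd (a := a + 2) (by omega), expCoeff_Pxy_of_odd (a := a + 1) (by omega),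
      expCoeff_Pxy_of_odd (a := a) (b := b + 2) (by omega), expCoeff_Pxy_of_odd (by omega)]
    ring

lemma swapXY_Pxy : swapXY Pxy = Pxy := by
  refine Series.ext_expCoeff fun a b => ?_
  rw [expCoeff_swapXY]
  rcases Nat.even_or_odd' (a + b) with ⟨m, hm | hm⟩
  · obtain ⟨k, hk⟩ : ∃ k : ℤ, (a : ℤ) - b = 2 * k := ⟨((a : ℤ) - b) / 2, by omega⟩
    rw [expCoeff_Pxy_of_eq hm hk, expCoeff_Pxy_of_eq (m := m) (k := -k) (by omega) (by omega),
      p_neg]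
  · rw [expCoeff_Pxy_of_odd (by omega), expCoeff_Pxy_of_odd (by omega)]

lemma setYZero_Pxy : setYZero (X 0 * dirDeriv Pxy - (2 : ℚ) • Pxy) = -2 := by
  rw [show (-2 : MvPowerSeries Unit ℚ) = setYZero (C (-2)) by
    rw [map_neg C, map_ofNat C, map_neg, map_ofNat], setYZero_eq_iff]
  rintro (_ | N)
  · rw [expCoeff_sub, expCoeff_X_zero_mul_zero_left, expCoeff_smul, expCoeff_C,
      if_pos ⟨rfl, rfl⟩, expCoeff_Pxy_of_eq (m := 0) (k := 0) rfl (by simp)]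
    simp [p]
  rw [expCoeff_sub, expCoeff_X_zero_mul_succ, expCoeff_dirDeriv, expCoeff_smul, expCoeff_C,
    if_neg (by omega)]
  rcases Nat.even_or_odd' N with ⟨m, rfl | rfl⟩
  · rw [expCoeff_Pxy_of_odd (by omega), expCoeff_Pxy_of_odd (by omega)]
    ring
  · rw [expCoeff_Pxy_of_eq (m := m + 1) (k := m + 1) (by omega) (by push_cast; ring),
      expCoeff_Pxy_of_eq (m := m + 1) (k := m) (by omega) (by push_cast; ring),
      p_succ_of_le le_rfl, p_succ_of_le (by omega)]
    push_cast
    ring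

lemma solvesBVP_Pxy : SolvesBVP Pxy := ⟨dirDeriv_dirDeriv_Pxy, swapXY_Pxy, setYZero_Pxy⟩

lemma expCoeff_coshXY (a b : ℕ) : expCoeff coshXY a b = if (a + b) % 2 = 0 then 1 else 0 := by
  simp only [expCoeff, coeff_apply, coshXY, single_add_single_apply_zero,
    single_add_single_apply_one]
  rw [mul_ite, mul_zero, mul_div_cancel₀ _ (by positivity)]

lemma expCoeff_sinhXY (a b : ℕ) : expCoeff sinhXY a b = if (a + b) % 2 = 1 then 1 else 0 := by
  simp only [expCoeff, coeff_apply, sinhXY, single_add_single_apply_zero,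
    single_add_single_apply_one]
  rw [mul_ite, mul_zero, mul_div_cancel₀ _ (by positivity)]

lemma expCoeff_coshXmY (a b : ℕ) :
    expCoeff coshXmY a b = if (a + b) % 2 = 0 then (-1) ^ b else 0 := by
  simp only [expCoeff, coeff_apply, coshXmY, single_add_single_apply_zero,
    single_add_single_apply_one]
  rw [mul_ite, mul_zero, mul_div_cancel₀ _ (by positivity)]

def Gxy : Series := coshXY - (X 0 + X 1) * sinhXY

lemma constantCoeff_Gxy : constantCoeff Gxy = 1 := by
  have h := expCoeff_coshXY 0 0
  simp only [expCoeff, single_zero, add_zero, coeff_zero_eq_constantCoeff_apply] at h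
  simp_all [Gxy]

lemma dirDeriv_inv_Gxy : dirDeriv Gxy⁻¹ = 0 := by
  have hcosh : dirDeriv coshXY = 0 := dirDeriv_eq_zero_of_expCoeff fun a b => by
    simp only [expCoeff_coshXY, Nat.add_right_comm a 1 b, add_assoc]
  have hsinh : dirDeriv sinhXY = 0 := dirDeriv_eq_zero_of_expCoeff fun a b => by
    simp only [expCoeff_sinhXY, Nat.add_right_comm a 1 b, add_assoc]
  have hsum : dirDeriv (X 0 + X 1 : Series) = 0 := by
    simp [dirDeriv, pderiv_X_self, pderiv_X_of_ne]
  rw [dirDeriv_inv, Gxy, map_sub, Derivation.leibniz, hcosh, hsinh, hsum]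
  simp

lemma swapXY_inv_Gxy : swapXY Gxy⁻¹ = Gxy⁻¹ := by
  have hcosh : swapXY coshXY = coshXY := Series.ext_expCoeff fun a b => by
    rw [expCoeff_swapXY, expCoeff_coshXY, expCoeff_coshXY, add_comm]
  have hsinh : swapXY sinhXY = sinhXY := Series.ext_expCoeff fun a b => by
    rw [expCoeff_swapXY, expCoeff_sinhXY, expCoeff_sinhXY, add_comm]
  have hG : swapXY Gxy = Gxy := by
    rw [Gxy, map_sub, map_mul, map_add, hcosh, hsinh]
    simp [swapXY, rename_X, add_comm]
  rw [MvPowerSeries.eq_inv_iff_mul_eq_one (by simp [constantCoeff_Gxy])]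
  calc swapXY Gxy⁻¹ * Gxy = swapXY (Gxy⁻¹ * Gxy) := by rw [map_mul, hG]
    _ = 1 := by rw [MvPowerSeries.inv_mul_cancel _ (by simp [constantCoeff_Gxy]), map_one]

lemma dirDeriv_dirDeriv_coshXmY : dirDeriv (dirDeriv coshXmY) = (4 : ℚ) • coshXmY := by
  refine Series.ext_expCoeff fun a b => ?_
  simp only [expCoeff_dirDeriv_dirDeriv, expCoeff_smul, expCoeff_coshXmY]
  split_ifs <;> first | omega | ring

lemma swapXY_coshXmY : swapXY coshXmY = coshXmY := by
  refine Series.ext_expCoeff fun a b => ?_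
  rw [expCoeff_swapXY, expCoeff_coshXmY, expCoeff_coshXmY, add_comm]
  split_ifs with h
  · rw [neg_one_pow_eq_pow_mod_two, neg_one_pow_eq_pow_mod_two (n := b),
      show a % 2 = b % 2 by omega]
  · rfl

lemma setYZero_coshXmY :
    setYZero (X 0 * dirDeriv coshXmY - (2 : ℚ) • coshXmY) = setYZero ((-2 : ℚ) • Gxy) := by
  rw [setYZero_eq_iff]
  rintro (_ | N)
  · simp only [Gxy, add_mul, expCoeff_sub, expCoeff_add, expCoeff_smul,
      expCoeff_X_zero_mul_zero_left, expCoeff_X_one_mul_zero_right, expCoeff_coshXmY,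
      expCoeff_coshXY]
    norm_num
  · simp only [Gxy, add_mul, expCoeff_sub, expCoeff_add, expCoeff_smul, expCoeff_X_zero_mul_succ,
      expCoeff_X_one_mul_zero_right, expCoeff_dirDeriv, expCoeff_coshXmY, expCoeff_coshXY,
      expCoeff_sinhXY]
    split_ifs <;> first | omega | ring

lemma solvesBVP_coshXmY_mul_inv_Gxy : SolvesBVP (coshXmY * Gxy⁻¹) where
  wave := by
    rw [dirDeriv.map_mul_of_map_eq_zero dirDeriv_inv_Gxy,
      dirDeriv.map_mul_of_map_eq_zero dirDeriv_inv_Gxy, dirDeriv_dirDeriv_coshXmY, smul_mul_assoc]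
  symm := by rw [map_mul, swapXY_coshXmY, swapXY_inv_Gxy]
  boundary := calc
    _ = setYZero (X 0 * dirDeriv coshXmY - (2 : ℚ) • coshXmY) * setYZero Gxy⁻¹ := by
      rw [dirDeriv.map_mul_of_map_eq_zero dirDeriv_inv_Gxy, ← map_mul, sub_mul, smul_mul_assoc,
        mul_assoc]
    _ = setYZero ((-2 : ℚ) • (Gxy * Gxy⁻¹)) := by
      rw [setYZero_coshXmY, ← map_mul, smul_mul_assoc]
    _ = -2 := by
      rw [MvPowerSeries.mul_inv_cancel _ (by simp [constantCoeff_Gxy]), map_smul, map_one,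
        neg_smul, two_smul]
      norm_num

end

/-- `P(x,y) (cosh(x+y) - (x+y) sinh(x+y)) = cosh(x-y)` in `ℚ[[x,y]]`. -/
theorem Pxy_identity :
    Pxy * (coshXY - (MvPowerSeries.X 0 + MvPowerSeries.X 1) * sinhXY) = coshXmY := by
  rw [solvesBVP_Pxy.unique solvesBVP_coshXmY_mul_inv_Gxy, mul_assoc, ← Gxy,
    MvPowerSeries.inv_mul_cancel _ (by simp [constantCoeff_Gxy]), mul_one]
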